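/- For every root α of E8, the pair of integers (r,s) with r = (α, k_1−k_2) and s = (α, k_1+k_2−2k_3) lies in the set {(0,0), (±2,0), (±1,±3), (±1,±1), (0,±2)}, and exactly 27 roots project to each of the six points (±1,±1), (0,±2) (the Magic Star tips), while 72 + 6 roots project to the remaining points. -/

import Mathlib

open Finset
open scoped Classical

noncomputable section

/-- Euclidean inner product on ℝ⁸. -/
def ip (u v : Fin 8 → ℝ) : ℝ := ∑ i, u i * v i

/-- Orthonormal basis vector `k_{i+1}`. -/
def e (i : Fin 8) : Fin 8 → ℝ := Pi.single i 1

/-- Roots `±k_i ± k_j`, `i < j`. -/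
def PhiO : Set (Fin 8 → ℝ) :=
  {v | ∃ i j : Fin 8, i < j ∧ ∃ a b : ℝ, (a = 1 ∨ a = -1) ∧ (b = 1 ∨ b = -1) ∧
    v = a • e i + b • e j}

/-- Spinorial roots `(1/2)(ε₁k₁ + ⋯ + ε₈k₈)`, even number of `+1`. -/
def PhiS : Set (Fin 8 → ℝ) :=
  {v | ∃ ε : Fin 8 → ℝ, (∀ i, ε i = 1 ∨ ε i = -1) ∧
    Even ((univ.filter (fun i => ε i = 1)).card) ∧ v = fun i => ε i / 2}

/-- The E₈ root system. -/
def Phi8 : Set (Fin 8 → ℝ) := PhiO ∪ PhiS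

/-- Magic Star projection coordinates. -/
def rc (α : Fin 8 → ℝ) : ℝ := ip α (e 0 - e 1)
def sc (α : Fin 8 → ℝ) : ℝ := ip α (e 0 + e 1 - (2 : ℝ) • e 2)

/-- The six tips of the Magic Star. -/
def tips : Set (ℝ × ℝ) := {(1,1), (1,-1), (-1,1), (-1,-1), (0,2), (0,-2)}

/-! Every E₈ root is half of an integer vector: `±2kᵢ ± 2kⱼ` (`i < j`) or `(±1, …, ±1)` with an even
number of `+1`. Indexing these by positions and signs parametrizes `Phi8` injectively by a finite
type, and in doubled coordinates the projection becomes the integer pair `(v₀ - v₁, v₀ + v₁ - 2v₂)`.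
The range of the projection and the sizes of its fibres are then decided by evaluation over the
240 indices. -/

def signOf (b : Bool) : ℤ := if b then 1 else -1

lemma signOf_ne_zero (b : Bool) : signOf b ≠ 0 := by cases b <;> decide

lemma odd_signOf (b : Bool) : Odd (signOf b) := by cases b <;> decide

lemma signOf_injective : Function.Injective signOf := by decide

lemma intCast_signOf_eq_one_iff {b : Bool} : (signOf b : ℝ) = 1 ↔ b = true := by
  cases b <;> norm_num [signOf]

lemma exists_intCast_signOf_eq_iff {x : ℝ} : (∃ b, (signOf b : ℝ) = x) ↔ x = 1 ∨ x = -1 := by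
  constructor
  · rintro ⟨b, rfl⟩
    cases b <;> simp [signOf]
  · rintro (rfl | rfl)
    exacts [⟨true, by simp [signOf]⟩, ⟨false, by simp [signOf]⟩]

abbrev OrthIndex := {p : (Fin 8 × Fin 8) × Bool × Bool // p.1.1 < p.1.2}

abbrev SpinIndex := {ε : Fin 8 → Bool // Even #{i | ε i = true}}

def orthDoubled : OrthIndex → Fin 8 → ℤ
  | ⟨((i, j), a, b), _⟩ => fun k => 2 * if k = i then signOf a else if k = j then signOf b else 0

def spinDoubled : SpinIndex → Fin 8 → ℤ
  | ⟨ε, _⟩ => fun k => signOf (ε k)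

def doubledRoot : OrthIndex ⊕ SpinIndex → Fin 8 → ℤ := Sum.elim orthDoubled spinDoubled

lemma orthDoubled_ne_zero_iff {i j : Fin 8} {a b : Bool} (h : i < j) (k : Fin 8) :
    orthDoubled ⟨((i, j), a, b), h⟩ k ≠ 0 ↔ k = i ∨ k = j := by
  simp only [orthDoubled]
  split_ifs <;> simp_all [signOf_ne_zero]

lemma orthDoubled_injective : Function.Injective orthDoubled := by
  rintro ⟨⟨⟨i, j⟩, a, b⟩, h⟩ ⟨⟨⟨i', j'⟩, a', b'⟩, h'⟩ hv
  dsimp only at h h'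
  have hsupp : ∀ k, k = i ∨ k = j ↔ k = i' ∨ k = j' := fun k => by
    rw [← orthDoubled_ne_zero_iff h, ← orthDoubled_ne_zero_iff h', hv]
  obtain ⟨rfl, rfl⟩ : i = i' ∧ j = j' := by
    have := (hsupp i).1 (.inl rfl); have := (hsupp j).1 (.inr rfl)
    have := (hsupp i').2 (.inl rfl); have := (hsupp j').2 (.inr rfl)
    omega
  have hi := congrFun hv i
  have hj := congrFun hv j
  simp only [orthDoubled, if_pos, h.ne', if_false] at hi hj
  simp [signOf_injective (by simpa using hi), signOf_injective (by simpa using hj)]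

lemma spinDoubled_injective : Function.Injective spinDoubled := by
  rintro ⟨ε, _⟩ ⟨ε', _⟩ hv
  exact Subtype.ext (funext fun k => signOf_injective (congrFun hv k))

lemma orthDoubled_ne_spinDoubled (p : OrthIndex) (q : SpinIndex) :
    orthDoubled p ≠ spinDoubled q := by
  intro hv
  have h0 := congrFun hv 0
  obtain ⟨⟨⟨i, j⟩, a, b⟩, h⟩ := p
  obtain ⟨ε, _⟩ := q
  have := odd_signOf (ε 0)
  simp only [orthDoubled, spinDoubled] at h0
  rw [← h0] at this
  exact Int.not_even_iff_odd.2 this (even_two_mul _)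

lemma doubledRoot_injective : Function.Injective doubledRoot :=
  orthDoubled_injective.sumElim spinDoubled_injective orthDoubled_ne_spinDoubled

def halve (v : Fin 8 → ℤ) : Fin 8 → ℝ := fun k => (v k : ℝ) / 2

lemma halve_injective : Function.Injective halve := fun v w h =>
  funext fun k => by simpa [halve] using congrFun h k

lemma halve_orthDoubled {i j : Fin 8} {a b : Bool} (h : i < j) :
    halve (orthDoubled ⟨((i, j), a, b), h⟩) = (signOf a : ℝ) • e i + (signOf b : ℝ) • e j := by
  funext k
  simp only [halve, orthDoubled, e, Pi.add_apply, Pi.smul_apply, Pi.single_apply, smul_eq_mul]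
  split_ifs <;> simp_all [h.ne]

lemma range_halve_orthDoubled : Set.range (halve ∘ orthDoubled) = PhiO := by
  ext v
  constructor
  · rintro ⟨⟨⟨⟨i, j⟩, a, b⟩, h⟩, rfl⟩
    exact ⟨i, j, h, _, _, exists_intCast_signOf_eq_iff.1 ⟨a, rfl⟩,
      exists_intCast_signOf_eq_iff.1 ⟨b, rfl⟩, halve_orthDoubled h⟩
  · rintro ⟨i, j, h, _, _, ha, hb, rfl⟩
    obtain ⟨a, rfl⟩ := exists_intCast_signOf_eq_iff.2 ha
    obtain ⟨b, rfl⟩ := exists_intCast_signOf_eq_iff.2 hb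
    exact ⟨⟨((i, j), a, b), h⟩, halve_orthDoubled h⟩

lemma range_halve_spinDoubled : Set.range (halve ∘ spinDoubled) = PhiS := by
  ext v
  constructor
  · rintro ⟨⟨ε, hε⟩, rfl⟩
    refine ⟨fun i => signOf (ε i), fun i => exists_intCast_signOf_eq_iff.1 ⟨ε i, rfl⟩, ?_, rfl⟩
    simpa only [intCast_signOf_eq_one_iff] using hε
  · rintro ⟨_, hε, heven, rfl⟩
    choose ε hε using fun i => exists_intCast_signOf_eq_iff.2 (hε i)
    obtain rfl : _ = fun i => (signOf (ε i) : ℝ) := funext fun i => (hε i).symm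
    exact ⟨⟨ε, by simpa only [intCast_signOf_eq_one_iff] using heven⟩, rfl⟩

lemma range_halve_doubledRoot : Set.range (halve ∘ doubledRoot) = Phi8 := by
  rw [doubledRoot, Sum.comp_elim, Set.Sum.elim_range, range_halve_orthDoubled,
    range_halve_spinDoubled, Phi8]

lemma ncard_sep_range_of_injective {ι α : Type*} [Fintype ι] {f : ι → α}
    (hf : Function.Injective f) (P : α → Prop) [DecidablePred P] :
    {a ∈ Set.range f | P a}.ncard = #{i | P (f i)} := by
  rw [← Set.inter_ofPred_eq_sep, ← Set.image_preimage_eq_range_inter,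
    Set.ncard_image_of_injective _ hf, Set.ncard_eq_toFinset_card', Set.preimage_ofPred_eq,
    Set.toFinset_ofPred]

lemma ncard_sep_phi8 (P : (Fin 8 → ℝ) → Prop) :
    {α ∈ Phi8 | P α}.ncard = #{t | P (halve (doubledRoot t))} := by
  rw [← range_halve_doubledRoot,
    ncard_sep_range_of_injective (halve_injective.comp doubledRoot_injective)]
  rfl

def doubledRS (v : Fin 8 → ℤ) : ℤ × ℤ := (v 0 - v 1, v 0 + v 1 - 2 * v 2)

def halvePair (p : ℤ × ℤ) : ℝ × ℝ := ((p.1 : ℝ) / 2, (p.2 : ℝ) / 2)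

lemma halvePair_injective : Function.Injective halvePair := by
  rintro ⟨a, b⟩ ⟨c, d⟩ h
  simp only [halvePair, Prod.mk.injEq, div_left_inj' (two_ne_zero' ℝ), Int.cast_inj] at h
  rw [h.1, h.2]

lemma rc_eq_sub (α : Fin 8 → ℝ) : rc α = α 0 - α 1 := by
  simp [rc, ip, e, Fin.sum_univ_eight, Pi.single_apply]
  ring

lemma sc_eq_sub (α : Fin 8 → ℝ) : sc α = α 0 + α 1 - 2 * α 2 := by
  simp [sc, ip, e, Fin.sum_univ_eight, Pi.single_apply]
  ring

lemma rc_sc_halve (v : Fin 8 → ℤ) : (rc (halve v), sc (halve v)) = halvePair (doubledRS v) := by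
  simp only [rc_eq_sub, sc_eq_sub, halve, halvePair, doubledRS]
  push_cast
  ring_nf

def doubledTips : Finset (ℤ × ℤ) := {(2, 2), (2, -2), (-2, 2), (-2, -2), (0, 4), (0, -4)}

def doubledRest : Finset (ℤ × ℤ) := {(0, 0), (4, 0), (-4, 0), (2, 6), (2, -6), (-2, 6), (-2, -6)}

lemma image_halvePair_doubledTips : halvePair '' doubledTips = tips := by
  norm_num [doubledTips, tips, Set.image_insert_eq, halvePair]

lemma image_halvePair_doubledRest :
    halvePair '' doubledRest =
      ({(0,0), (2,0), (-2,0), (1,3), (1,-3), (-1,3), (-1,-3)} : Set (ℝ × ℝ)) := by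
  norm_num [doubledRest, Set.image_insert_eq, halvePair]

set_option maxRecDepth 100000 in
lemma doubledRS_doubledRoot_mem :
    ∀ t, doubledRS (doubledRoot t) ∈ doubledTips ∪ doubledRest := by
  decide

set_option maxRecDepth 100000 in
lemma card_doubledRS_doubledRoot_eq_tip :
    ∀ q ∈ doubledTips, #{t | doubledRS (doubledRoot t) = q} = 27 := by
  decide

set_option maxRecDepth 100000 in
lemma card_doubledRS_doubledRoot_not_tip :
    #{t | doubledRS (doubledRoot t) ∉ doubledTips} = 78 := by
  decide

theorem magic_star_projection :
    (∀ α ∈ Phi8, (rc α, sc α) ∈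
      tips ∪ ({(0,0), (2,0), (-2,0), (1,3), (1,-3), (-1,3), (-1,-3)} : Set (ℝ × ℝ))) ∧
    (∀ p ∈ tips, {α ∈ Phi8 | (rc α, sc α) = p}.ncard = 27) ∧
    {α ∈ Phi8 | (rc α, sc α) ∉ tips}.ncard = 78 := by
  refine ⟨?_, ?_, ?_⟩
  · rw [← range_halve_doubledRoot]
    rintro _ ⟨t, rfl⟩
    rw [← image_halvePair_doubledTips, ← image_halvePair_doubledRest, ← Set.image_union,
      Function.comp_apply, rc_sc_halve, ← Finset.coe_union]
    exact Set.mem_image_of_mem _ (doubledRS_doubledRoot_mem t)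
  · rw [← image_halvePair_doubledTips]
    rintro _ ⟨q, hq, rfl⟩
    simp only [ncard_sep_phi8, rc_sc_halve, halvePair_injective.eq_iff]
    convert card_doubledRS_doubledRoot_eq_tip q hq
  · simp only [ncard_sep_phi8, rc_sc_halve, ← image_halvePair_doubledTips,
      halvePair_injective.mem_set_image, Finset.mem_coe]
    convert card_doubledRS_doubledRoot_not_tip
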